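/- arXiv:1802.09859 — 3 statements merged into one kernel-verified Lean document; each statement's English description precedes it below -/
import Mathlib

section
/- Let M be a matroid on an n-element set E with rank function r and rank r(M) = r(E). Then in the ring of formal power series in two variables v, w with integer coefficients, the following identity holds: (1 − vw)·(1 − v)^n·(1 − w)^n · Σ_{t,u ≥ 0} Q_M(t,u)·v^t·w^u = Σ_{S ⊆ E} v^{r(M) − r(S)} · w^{|S| − r(S)} · (1 − v)^{|S|} · (1 − w)^{n − |S|}. (This is the denominator-cleared form of the identity Σ_{t,u≥0} Q_M(t,u)v^t w^u = T_M((1−vw)/(1−v), (1−vw)/(1−w)) / ((1−v)^{n−r(M)}(1−w)^{r(M)}(1−vw)), which expresses that the Tutte polynomial of M and the lattice-point counting function Q_M determine each other.) -/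
open scoped Pointwise
open Finset

noncomputable section

/-- The standard simplex `Δ = conv{e_i : i ∈ E}` in `ℝ^E`. -/
def stdSimplexSet (α : Type*) [Fintype α] [DecidableEq α] : Set (α → ℝ) :=
  convexHull ℝ {x : α → ℝ | ∃ i : α, x = Pi.single i (1 : ℝ)}

/-- The number of lattice points (points of `ℤ^E`) in a subset of `ℝ^E`. -/
def latticeCount {α : Type*} (P : Set (α → ℝ)) : ℕ :=
  Set.ncard {q : α → ℤ | (fun i => (q i : ℝ)) ∈ P}

/-- `Qcount P t u` is the number of lattice points of `P + uΔ + t∇`. -/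
def Qcount {α : Type*} [Fintype α] [DecidableEq α] (P : Set (α → ℝ)) (t u : ℕ) : ℕ :=
  latticeCount (P + (u : ℝ) • stdSimplexSet α + (t : ℝ) • (-stdSimplexSet α))

/-- A polymatroid on a finite ground set, given by its rank function. -/
structure PolyMatroid (α : Type*) [Fintype α] [DecidableEq α] where
  rk : Finset α → ℕ
  rk_empty : rk ∅ = 0
  rk_mono : ∀ ⦃S T : Finset α⦄, S ⊆ T → rk S ≤ rk T
  rk_submod : ∀ S T : Finset α, rk (S ∪ T) + rk (S ∩ T) ≤ rk S + rk T

variable {α : Type*} [Fintype α] [DecidableEq α]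

/-- A basis of a matroid (an independent spanning set). -/
def PolyMatroid.IsBasis (M : PolyMatroid α) (B : Finset α) : Prop :=
  M.rk B = B.card ∧ M.rk B = M.rk Finset.univ

/-- The indicator vector of a finite set. -/
def indicatorVec {α : Type*} [DecidableEq α] (B : Finset α) : α → ℝ :=
  fun i => if i ∈ B then 1 else 0

/-- The base polytope of a matroid: the convex hull of indicator vectors of bases. -/
def matroidPolytope (M : PolyMatroid α) : Set (α → ℝ) :=
  convexHull ℝ {x : α → ℝ | ∃ B : Finset α, M.IsBasis B ∧ x = indicatorVec B}

/-- The base polytope of a polymatroid, by its inequality description. -/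
def PolyMatroid.polytope (M : PolyMatroid α) : Set (α → ℝ) :=
  {x | (∑ i, x i) = (M.rk Finset.univ : ℝ) ∧
    ∀ S : Finset α, (∑ i ∈ S, x i) ≤ (M.rk S : ℝ)}

/-- `c : ℕ × ℕ → ℤ` is a `Q'`-datum for the counting function `Q` if it is finitely
supported and interpolates `Q` in the binomial basis. -/
def IsQdatumFun (Q : ℕ → ℕ → ℕ) (c : ℕ × ℕ → ℤ) : Prop :=
  (Function.support c).Finite ∧
    ∀ t u : ℕ, (Q t u : ℤ) = ∑ᶠ p : ℕ × ℕ, c p * (t.choose p.1 : ℤ) * (u.choose p.2 : ℤ)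

/-- A `Q'`-datum for the lattice-point counting function of the polytope `P`. -/
def IsQdatum (P : Set (α → ℝ)) (c : ℕ × ℕ → ℤ) : Prop :=
  IsQdatumFun (Qcount P) c

/-- The polynomial `Q'` associated to a `Q'`-datum, as a function on `ℚ × ℚ`. -/
def Qprime (c : ℕ × ℕ → ℤ) (x y : ℚ) : ℚ :=
  ∑ᶠ p : ℕ × ℕ, (c p : ℚ) * (x - 1) ^ p.1 * (y - 1) ^ p.2

/-- The polynomial `Q'` associated to a `Q'`-datum, as a polynomial in two variables. -/
def QprimePoly (c : ℕ × ℕ → ℤ) : MvPolynomial (Fin 2) ℤ :=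
  ∑ᶠ p : ℕ × ℕ,
    MvPolynomial.C (c p) * (MvPolynomial.X 0 - 1) ^ p.1 * (MvPolynomial.X 1 - 1) ^ p.2

/-- The Tutte polynomial of a matroid, as a function on `ℚ × ℚ`. -/
def TuttePoly (M : PolyMatroid α) (x y : ℚ) : ℚ :=
  ∑ S : Finset α,
    (x - 1) ^ (M.rk Finset.univ - M.rk S) * (y - 1) ^ (S.card - M.rk S)


/-!
The integer points of `P(M) + uΔ + t∇` are the `y ∈ ℤ^E` with `y(E) = r(M) + u - t` and
`y(A) ≤ r(A) + u` for all `A`: uncrossing of tight sets lets one peel off a unit vector at a time,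
so every such `y` is a basis indicator plus `u` unit vectors minus `t` unit vectors.

The excess `A ↦ y(A) - r(A)` is maximized at the positive support `S` of `y`. Hence for
`t, u ≥ 1` the points not already counted by `Q_M(t-1, u-1)` are those with `y(S) = r(S) + u`.
Writing such a point as `1_S + a - b` with `a ≥ 0` supported on `S` and `b ≥ 0` supported off `S`
counts them as `Σ_S (|S| multichoose (u + r(S) - |S|)) · (|Sᶜ| multichoose (t + r(S) - r(M)))`,
which is the coefficient of `v^t w^u` in
`Σ_S v^(r(M) - r(S)) w^(|S| - r(S)) (1 - v)^(-|Sᶜ|) (1 - w)^(-|S|)`.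
-/

lemma Finset.natCast_card_le_sum_of_one_le {ι R : Type*} [AddCommMonoidWithOne R]
    [PartialOrder R] [IsOrderedAddMonoid R] {s : Finset ι} {f : ι → R} (h : ∀ i ∈ s, 1 ≤ f i) :
    (#s : R) ≤ ∑ i ∈ s, f i := by
  simpa using card_nsmul_le_sum s f 1 h

lemma Finset.sum_add_pi_single {ι M : Type*} [DecidableEq ι] [AddCommMonoid M] (s : Finset ι)
    (f : ι → M) (i : ι) (z : M) :
    ∑ j ∈ s, (f + Pi.single i z : ι → M) j = ∑ j ∈ s, f j + if i ∈ s then z else 0 := by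
  simp [sum_add_distrib, sum_pi_single']

lemma Set.Finite.ncard_eq_sum_ncard_fiber {β γ : Type*} [Fintype γ] [DecidableEq γ] {s : Set β}
    (hs : s.Finite) (f : β → γ) : s.ncard = ∑ c, {x ∈ s | f x = c}.ncard := by
  rw [Set.ncard_eq_toFinset_card s hs,
    card_eq_sum_card_fiberwise (f := f) (t := Finset.univ) fun x _ => by simp]
  refine sum_congr rfl fun c _ => ?_
  rw [← Set.ncard_coe_finset]
  congr 1
  ext x
  simp

lemma stdSimplexSet_eq_stdSimplex : stdSimplexSet α = stdSimplex ℝ α := by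
  rw [stdSimplexSet, ← convexHull_basis_eq_stdSimplex]
  congr 1
  ext x
  simp [funext_iff, Pi.single_apply, eq_comm]

omit [Fintype α] in
lemma sum_indicatorVec (A B : Finset α) : ∑ i ∈ A, indicatorVec B i = #(A ∩ B) := by
  simp [indicatorVec, sum_ite_mem]

def posSupport (y : α → ℤ) : Finset α := univ.filter fun i => 0 < y i

omit [DecidableEq α] in
@[simp]
lemma mem_posSupport {y : α → ℤ} {i : α} : i ∈ posSupport y ↔ 0 < y i := by
  simp [posSupport]

def indicatorAddSub (S : Finset α) (p : (α →₀ ℕ) × (α →₀ ℕ)) : α → ℤ :=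
  fun i => (if i ∈ S then 1 else 0) + p.1 i - p.2 i

omit [Fintype α] in
lemma apply_eq_zero_of_mem_finsuppAntidiag {s : Finset α} {m : ℕ} {a : α →₀ ℕ}
    (ha : a ∈ s.finsuppAntidiag m) {i : α} (hi : i ∉ s) : a i = 0 :=
  Finsupp.notMem_support_iff.1 fun h => hi ((mem_finsuppAntidiag.1 ha).2 h)

lemma indicatorAddSub_injOn (S : Finset α) (m n : ℕ) :
    Set.InjOn (indicatorAddSub S) ↑(S.finsuppAntidiag m ×ˢ Sᶜ.finsuppAntidiag n) := by
  rintro ⟨a, b⟩ hab ⟨a', b'⟩ hab' h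
  simp only [coe_product, Set.mem_prod, mem_coe] at hab hab'
  have key (i : α) : a i = a' i ∧ b i = b' i := by
    have hi := congrFun h i
    by_cases hiS : i ∈ S
    · have := apply_eq_zero_of_mem_finsuppAntidiag hab.2 (notMem_compl.2 hiS)
      have := apply_eq_zero_of_mem_finsuppAntidiag hab'.2 (notMem_compl.2 hiS)
      simp only [indicatorAddSub, hiS, if_true] at hi
      omega
    · have := apply_eq_zero_of_mem_finsuppAntidiag hab.1 hiS
      have := apply_eq_zero_of_mem_finsuppAntidiag hab'.1 hiS
      simp only [indicatorAddSub, hiS, if_false] at hi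
      omega
  exact Prod.ext (Finsupp.ext fun i => (key i).1) (Finsupp.ext fun i => (key i).2)

section MvPowerSeries

open MvPowerSeries

variable {σ : Type*} [Fintype σ] [DecidableEq σ]

def multichooseSeries (n : σ → ℕ) : MvPowerSeries σ ℤ :=
  fun d => ∏ k, ((n k).multichoose (d k) : ℤ)

omit [DecidableEq σ] in
lemma coeff_multichooseSeries (n : σ → ℕ) (d : σ →₀ ℕ) :
    coeff d (multichooseSeries n) = ∏ k, ((n k).multichoose (d k) : ℤ) := rfl

lemma multichooseSeries_zero : multichooseSeries (0 : σ → ℕ) = 1 := by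
  ext d
  have h : ∀ m, ((0 : ℕ).multichoose m : ℤ) = if m = 0 then 1 else 0 := by
    rintro (_ | m) <;> simp [Nat.multichoose_zero_succ]
  simp only [coeff_multichooseSeries, coeff_one, Pi.zero_apply, h, Fintype.prod_boole]
  simp [Finsupp.ext_iff]

omit [Fintype σ] [DecidableEq σ] in
lemma coeff_one_sub_X_mul (k : σ) (φ : MvPowerSeries σ ℤ) (d : σ →₀ ℕ) :
    coeff d ((1 - X k) * φ) =
      coeff d φ - if 1 ≤ d k then coeff (d - Finsupp.single k 1) φ else 0 := by
  rw [sub_mul, one_mul, map_sub, X_def, coeff_monomial_mul, one_mul]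
  simp only [Finsupp.single_le_iff]

lemma one_sub_X_mul_multichooseSeries (n : σ → ℕ) (k : σ) :
    (1 - X k) * multichooseSeries (n + Pi.single k 1) = multichooseSeries n := by
  ext d
  simp only [coeff_one_sub_X_mul, coeff_multichooseSeries, Fintype.prod_eq_mul_prod_compl k]
  have hrest : ∀ e : σ →₀ ℕ, (∀ j ≠ k, e j = d j) →
      ∏ j ∈ {k}ᶜ, (((n + Pi.single k 1 : σ → ℕ) j).multichoose (e j) : ℤ) =
        ∏ j ∈ {k}ᶜ, ((n j).multichoose (d j) : ℤ) := fun e he =>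
    prod_congr rfl fun j hj => by
      rw [mem_compl, mem_singleton] at hj
      simp [hj, he j hj]
  rw [hrest d fun _ _ => rfl, hrest _ fun j hj => by simp [Ne.symm hj]]
  simp only [Pi.add_apply, Pi.single_eq_same, Finsupp.tsub_apply, Finsupp.single_eq_same]
  cases d k with
  | zero => simp
  | succ m =>
    rw [if_pos (Nat.le_add_left 1 m), Nat.add_sub_cancel, Nat.multichoose_succ_succ]
    push_cast
    ring

lemma one_sub_X_pow_mul_multichooseSeries (n : σ → ℕ) (k : σ) (m : ℕ) :
    (1 - X k) ^ m * multichooseSeries (n + Pi.single k m) = multichooseSeries n := by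
  induction m with
  | zero => simp
  | succ m ih =>
    rw [pow_succ, mul_assoc, Pi.single_add (f := fun _ => ℕ) k m 1, ← add_assoc,
      one_sub_X_mul_multichooseSeries, ih]

lemma prod_one_sub_X_pow_mul_multichooseSeries (n : σ → ℕ) :
    (∏ k, (1 - X k) ^ n k) * multichooseSeries n = 1 := by
  suffices h : ∀ s : Finset σ,
      (∏ k ∈ s, (1 - X k) ^ n k) * multichooseSeries (∑ k ∈ s, Pi.single k (n k)) = 1 by
    simpa [univ_sum_single] using h univ
  intro s
  induction s using Finset.induction with
  | empty => simp [multichooseSeries_zero]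
  | insert a s ha ih =>
    rw [prod_insert ha, sum_insert ha, add_comm, mul_comm ((1 - X a) ^ n a), mul_assoc,
      one_sub_X_pow_mul_multichooseSeries, ih]

lemma coeff_X_pow_mul_X_pow_mul {f : ℕ → ℕ → ℤ} {φ : MvPowerSeries (Fin 2) ℤ}
    (hφ : ∀ d, coeff d φ = f (d 0) (d 1)) (p q : ℕ) (d : Fin 2 →₀ ℕ) :
    coeff d (X 0 ^ p * X 1 ^ q * φ) = if p ≤ d 0 ∧ q ≤ d 1 then f (d 0 - p) (d 1 - q) else 0 := by
  rw [X_pow_eq, X_pow_eq, monomial_mul_monomial, one_mul, coeff_monomial_mul, one_mul, hφ]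
  simp [Finsupp.le_def, Fin.forall_fin_two]

lemma coeff_multichooseSeries_fin_two (a b : ℕ) (d : Fin 2 →₀ ℕ) :
    coeff d (multichooseSeries ![a, b]) = a.multichoose (d 0) * b.multichoose (d 1) := by
  simp [coeff_multichooseSeries, Fin.prod_univ_two]

lemma one_sub_X_pow_mul_X_pow_mul_multichooseSeries (p q a b : ℕ) :
    (1 - X 0) ^ (b + a) * (1 - X 1) ^ (b + a) * (X 0 ^ p * X 1 ^ q * multichooseSeries ![a, b]) =
      (X 0 ^ p * X 1 ^ q * (1 - X 0) ^ b * (1 - X 1) ^ a : MvPowerSeries (Fin 2) ℤ) := by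
  have h := prod_one_sub_X_pow_mul_multichooseSeries ![a, b]
  simp only [Fin.prod_univ_two, Matrix.cons_val_zero, Matrix.cons_val_one] at h
  linear_combination (X 0 ^ p * X 1 ^ q * (1 - X 0) ^ b * (1 - X 1) ^ a) * h

end MvPowerSeries

namespace PolyMatroid

variable (M : PolyMatroid α)

lemma rk_union_le (S T : Finset α) : M.rk (S ∪ T) ≤ M.rk S + M.rk T :=
  (Nat.le_add_right _ _).trans (M.rk_submod S T)

lemma rk_le_card (hM : ∀ i, M.rk {i} ≤ 1) (S : Finset α) : M.rk S ≤ #S := by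
  induction S using Finset.induction with
  | empty => simp [M.rk_empty]
  | insert i S hi ih =>
    have := M.rk_union_le {i} S
    rw [← insert_eq] at this
    rw [card_insert_of_notMem hi]
    linarith [hM i]

lemma rk_le_rk_add_card_sdiff (hM : ∀ i, M.rk {i} ≤ 1) {S T : Finset α} (h : S ⊆ T) :
    M.rk T ≤ M.rk S + #(T \ S) := by
  have := M.rk_union_le S (T \ S)
  rw [union_sdiff_of_subset h] at this
  linarith [M.rk_le_card hM (T \ S)]

lemma card_inter_le_rk (hM : ∀ i, M.rk {i} ≤ 1) {B : Finset α} (hB : M.IsBasis B)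
    (A : Finset α) : #(A ∩ B) ≤ M.rk A := by
  have h := M.rk_le_rk_add_card_sdiff hM (inter_subset_left : B ∩ A ⊆ B)
  rw [sdiff_inter_self_left] at h
  have := card_inter_add_card_sdiff B A
  have := M.rk_mono (inter_subset_right : B ∩ A ⊆ A)
  rw [inter_comm]
  have := hB.1
  omega

lemma sum_sub_rk_le_posSupport (hM : ∀ i, M.rk {i} ≤ 1) (y : α → ℤ) (A : Finset α) :
    ∑ i ∈ A, y i - M.rk A ≤ ∑ i ∈ posSupport y, y i - M.rk (posSupport y) := by
  set S := posSupport y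
  have hS : ∀ i, i ∈ S ↔ 0 < y i := fun _ => mem_posSupport
  have h_drop : ∑ i ∈ A \ S, y i ≤ 0 :=
    sum_nonpos fun i hi => not_lt.1 fun h => (mem_sdiff.1 hi).2 ((hS i).2 h)
  have h_add : #(S \ (A ∩ S)) ≤ ∑ i ∈ S \ (A ∩ S), y i :=
    Finset.natCast_card_le_sum_of_one_le fun i hi => (hS i).1 (mem_sdiff.1 hi).1
  have h_rk := M.rk_le_rk_add_card_sdiff hM (inter_subset_right : A ∩ S ⊆ S)
  have h_mono := M.rk_mono (inter_subset_left : A ∩ S ⊆ A)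
  have := sum_inter_add_sum_sdiff A S y
  have := sum_sdiff (f := y) (inter_subset_right : A ∩ S ⊆ S)
  omega

/-- The integer points of `P(M) + uΔ + t∇`, by their inequality description. -/
def latticePoints (t u : ℕ) : Set (α → ℤ) :=
  {y | ∑ i, y i = M.rk univ + u - t ∧ ∀ A : Finset α, ∑ i ∈ A, y i ≤ M.rk A + u}

def IsTight (c : ℤ) (y : α → ℤ) (A : Finset α) : Prop :=
  ∑ i ∈ A, y i = M.rk A + c

lemma convex_polytope : Convex ℝ M.polytope := by
  rintro x ⟨hx, hx'⟩ z ⟨hz, hz'⟩ a b ha hb hab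
  have hsum : ∀ A : Finset α, ∑ i ∈ A, (a • x + b • z) i = a * ∑ i ∈ A, x i + b * ∑ i ∈ A, z i :=
    fun A => by simp [sum_add_distrib, mul_sum]
  refine ⟨by rw [hsum, hx, hz, ← add_mul, hab, one_mul], fun A => ?_⟩
  rw [hsum]
  nlinarith [hx' A, hz' A]

variable {M} {c : ℤ} {t u : ℕ} {y : α → ℤ}

lemma mem_Icc_of_mem_latticePoints (hM : ∀ i, M.rk {i} ≤ 1) (hy : y ∈ M.latticePoints t u)
    (i : α) : y i ∈ Set.Icc (-(t : ℤ)) (u + 1) := by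
  obtain ⟨hsum, hle⟩ := hy
  have h_rest := hle (univ.erase i)
  have h_single := hle {i}
  have := sum_erase_add univ y (mem_univ i)
  have := M.rk_mono (erase_subset i univ)
  have := hM i
  rw [sum_singleton] at h_single
  constructor <;> omega

lemma latticePoints_finite (hM : ∀ i, M.rk {i} ≤ 1) (t u : ℕ) :
    (M.latticePoints t u).Finite :=
  (Set.Finite.pi' fun _ => Set.finite_Icc _ _).subset
    fun _ hy => mem_Icc_of_mem_latticePoints hM hy

lemma isBasis_posSupport (hM : ∀ i, M.rk {i} ≤ 1) (hy : y ∈ M.latticePoints 0 0) :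
    M.IsBasis (posSupport y) ∧ ∀ i, y i = if i ∈ posSupport y then 1 else 0 := by
  have h01 := mem_Icc_of_mem_latticePoints hM hy
  have hind : ∀ i, y i = if i ∈ posSupport y then 1 else 0 := fun i => by
    have := h01 i
    simp only [mem_posSupport, Set.mem_Icc] at this ⊢
    split_ifs <;> omega
  have hsum_S : ∑ i ∈ posSupport y, y i = #(posSupport y) := by
    rw [sum_congr rfl fun i hi => (hind i).trans (if_pos hi)]
    simp
  have hsum : ∑ i, y i = #(posSupport y) := by
    rw [← hsum_S, ← sum_subset (subset_univ _) fun i _ hi => (hind i).trans (if_neg hi)]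
  obtain ⟨htot, hle⟩ := hy
  have := hle (posSupport y)
  have := M.rk_le_card hM (posSupport y)
  refine ⟨⟨?_, ?_⟩, hind⟩ <;> push_cast at * <;> omega

lemma IsTight.union_and_inter (hy : ∀ A : Finset α, ∑ i ∈ A, y i ≤ M.rk A + c) {A B : Finset α}
    (hA : M.IsTight c y A) (hB : M.IsTight c y B) :
    M.IsTight c y (A ∪ B) ∧ M.IsTight c y (A ∩ B) := by
  have := sum_union_inter (s₁ := A) (s₂ := B) (f := y)
  have := M.rk_submod A B
  have := hy (A ∪ B)
  have := hy (A ∩ B)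
  unfold IsTight at *
  constructor <;> omega

lemma exists_isTight_forall_subset (hy : ∀ A : Finset α, ∑ i ∈ A, y i ≤ M.rk A + c)
    (h : ∃ A, M.IsTight c y A) : ∃ U, M.IsTight c y U ∧ ∀ A, M.IsTight c y A → A ⊆ U := by
  classical
  let tight := univ.filter (M.IsTight c y)
  have hne : tight.Nonempty := by obtain ⟨A, hA⟩ := h; exact ⟨A, by simpa [tight] using hA⟩
  refine ⟨tight.sup' hne id, ?_, fun A hA => le_sup' id (by simpa [tight] using hA)⟩
  exact sup'_induction hne id (fun A hA B hB => (hA.union_and_inter hy hB).1)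
    fun A hA => by simpa [tight] using hA

lemma exists_isTight_forall_superset (hy : ∀ A : Finset α, ∑ i ∈ A, y i ≤ M.rk A + c)
    (h : ∃ A, M.IsTight c y A) : ∃ T, M.IsTight c y T ∧ ∀ A, M.IsTight c y A → T ⊆ A := by
  classical
  let tight := univ.filter (M.IsTight c y)
  have hne : tight.Nonempty := by obtain ⟨A, hA⟩ := h; exact ⟨A, by simpa [tight] using hA⟩
  refine ⟨tight.inf' hne id, ?_, fun A hA => inf'_le id (by simpa [tight] using hA)⟩
  exact inf'_induction hne id (fun A hA B hB => (hA.union_and_inter hy hB).2)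
    fun A hA => by simpa [tight] using hA

lemma matroidPolytope_subset_polytope (hM : ∀ i, M.rk {i} ≤ 1) :
    matroidPolytope M ⊆ M.polytope := by
  refine convexHull_min ?_ M.convex_polytope
  rintro _ ⟨B, hB, rfl⟩
  refine ⟨?_, fun A => ?_⟩
  · rw [sum_indicatorVec, univ_inter, ← hB.1, hB.2]
  · rw [sum_indicatorVec]
    exact_mod_cast M.card_inter_le_rk hM hB A

lemma mem_latticePoints_of_mem (hM : ∀ i, M.rk {i} ≤ 1)
    (hy : (fun i => (y i : ℝ)) ∈
      matroidPolytope M + (u : ℝ) • stdSimplex ℝ α + (t : ℝ) • -stdSimplex ℝ α) :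
    y ∈ M.latticePoints t u := by
  obtain ⟨_, ⟨x, hx, _, ⟨δ, hδ, rfl⟩, rfl⟩, _, ⟨ε, hε, rfl⟩, hxy⟩ := hy
  obtain ⟨hx_univ, hx_le⟩ := matroidPolytope_subset_polytope hM hx
  obtain ⟨hδ_nonneg, hδ_sum⟩ := hδ
  obtain ⟨hε_nonneg, hε_sum⟩ := hε
  have hsum : ∀ A : Finset α,
      (∑ i ∈ A, y i : ℝ) = ∑ i ∈ A, x i + u * ∑ i ∈ A, δ i - t * ∑ i ∈ A, -ε i := fun A => by
    simp [← hxy, sum_add_distrib, mul_sum]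
  refine ⟨?_, fun A => ?_⟩
  · have := hsum univ
    rw [hx_univ, hδ_sum] at this
    simp only [Pi.neg_apply] at hε_sum
    rw [hε_sum] at this
    exact_mod_cast (by linarith : (∑ i, y i : ℝ) = M.rk univ + u - t)
  · have h1 : ∑ i ∈ A, δ i ≤ 1 :=
      hδ_sum ▸ sum_le_sum_of_subset_of_nonneg (subset_univ A) fun i _ _ => hδ_nonneg i
    have h2 : 0 ≤ ∑ i ∈ A, -ε i := sum_nonneg fun i _ => hε_nonneg i
    have := hsum A
    have := hx_le A
    exact_mod_cast (by nlinarith : (∑ i ∈ A, y i : ℝ) ≤ M.rk A + u)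

section

variable [Nonempty α]

lemma exists_forall_isTight_notMem (hy : ∀ A : Finset α, ∑ i ∈ A, y i ≤ M.rk A + c)
    (huniv : ¬ M.IsTight c y univ) : ∃ i, ∀ A, M.IsTight c y A → i ∉ A := by
  by_cases h : ∃ A, M.IsTight c y A
  · obtain ⟨U, hU, hmax⟩ := exists_isTight_forall_subset hy h
    obtain ⟨i, hi⟩ : ∃ i, i ∉ U := by
      by_contra! hall
      exact huniv (eq_univ_of_forall hall ▸ hU)
    exact ⟨i, fun A hA hiA => hi (hmax A hA hiA)⟩
  · exact ⟨Classical.arbitrary α, fun A hA => (h ⟨A, hA⟩).elim⟩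

lemma exists_forall_isTight_mem (hy : ∀ A : Finset α, ∑ i ∈ A, y i ≤ M.rk A + c) (hc : 0 < c) :
    ∃ i, ∀ A, M.IsTight c y A → i ∈ A := by
  by_cases h : ∃ A, M.IsTight c y A
  · obtain ⟨T, hT, hmin⟩ := exists_isTight_forall_superset hy h
    obtain ⟨i, hi⟩ : T.Nonempty := by
      rw [nonempty_iff_ne_empty]
      rintro rfl
      simp [IsTight, M.rk_empty] at hT
      omega
    exact ⟨i, fun A hA => hmin A hA hi⟩
  · exact ⟨Classical.arbitrary α, fun A hA => (h ⟨A, hA⟩).elim⟩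

lemma exists_add_single_mem_latticePoints (hy : y ∈ M.latticePoints (t + 1) u) :
    ∃ i, (y + Pi.single i 1 : α → ℤ) ∈ M.latticePoints t u := by
  obtain ⟨hsum, hle⟩ := hy
  obtain ⟨i, hi⟩ := exists_forall_isTight_notMem (c := u) hle (by unfold IsTight; omega)
  refine ⟨i, ?_, fun A => ?_⟩
  · rw [Finset.sum_add_pi_single, if_pos (mem_univ i)]
    omega
  · rw [Finset.sum_add_pi_single]
    by_cases hiA : i ∈ A
    · have := hle A
      have hnt : ¬ M.IsTight u y A := fun h => hi A h hiA
      unfold IsTight at hnt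
      rw [if_pos hiA]
      omega
    · simpa [hiA] using hle A

lemma exists_sub_single_mem_latticePoints (hy : y ∈ M.latticePoints t (u + 1)) :
    ∃ i, (y - Pi.single i 1 : α → ℤ) ∈ M.latticePoints t u := by
  obtain ⟨hsum, hle⟩ := hy
  obtain ⟨i, hi⟩ := exists_forall_isTight_mem (c := (u + 1 : ℕ)) hle (by omega)
  refine ⟨i, ?_, fun A => ?_⟩
  · rw [sub_eq_add_neg, ← Pi.single_neg, Finset.sum_add_pi_single, if_pos (mem_univ i)]
    push_cast at hsum
    omega
  · rw [sub_eq_add_neg, ← Pi.single_neg, Finset.sum_add_pi_single]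
    have := hle A
    by_cases hiA : i ∈ A
    · rw [if_pos hiA]
      push_cast at this
      omega
    · have := mt (hi A) hiA
      unfold IsTight at this
      rw [if_neg hiA]
      push_cast at this ⊢
      omega

/-- Peel unit vectors off `y`, using `(s + 1) • K = s • K + K` for the convex sets `K = Δ, ∇`. -/
lemma mem_of_mem_latticePoints (hM : ∀ i, M.rk {i} ≤ 1) :
    ∀ {t u : ℕ} {y : α → ℤ}, y ∈ M.latticePoints t u →
      (fun i => (y i : ℝ)) ∈
        matroidPolytope M + (u : ℝ) • stdSimplex ℝ α + (t : ℝ) • -stdSimplex ℝ α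
  | 0, 0, y, hy => by
    obtain ⟨hB, hind⟩ := isBasis_posSupport hM hy
    have hne : (stdSimplex ℝ α).Nonempty := ⟨_, single_mem_stdSimplex ℝ (Classical.arbitrary α)⟩
    rw [Nat.cast_zero, Set.zero_smul_set hne, Set.zero_smul_set hne.neg, add_zero, add_zero]
    refine subset_convexHull ℝ _ ⟨_, hB, funext fun i => ?_⟩
    rw [hind i]
    split_ifs <;> simp [indicatorVec, *]
  | t + 1, u, y, hy => by
    obtain ⟨i, hi⟩ := exists_add_single_mem_latticePoints hy
    rw [Nat.cast_succ, (convex_stdSimplex ℝ α).neg.add_smul (Nat.cast_nonneg t) zero_le_one,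
      one_smul, ← add_assoc]
    convert Set.add_mem_add (mem_of_mem_latticePoints hM hi)
      (Set.neg_mem_neg.2 (single_mem_stdSimplex ℝ i)) using 1
    ext j
    by_cases hj : j = i <;> simp [hj]
  | 0, u + 1, y, hy => by
    obtain ⟨i, hi⟩ := exists_sub_single_mem_latticePoints hy
    rw [Nat.cast_succ, (convex_stdSimplex ℝ α).add_smul (Nat.cast_nonneg u) zero_le_one,
      one_smul, ← add_assoc, add_right_comm _ (stdSimplex ℝ α)]
    convert Set.add_mem_add (mem_of_mem_latticePoints hM hi) (single_mem_stdSimplex ℝ i) using 1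
    ext j
    by_cases hj : j = i <;> simp [hj]

lemma Qcount_matroidPolytope (hM : ∀ i, M.rk {i} ≤ 1) (t u : ℕ) :
    Qcount (matroidPolytope M) t u = (M.latticePoints t u).ncard := by
  unfold Qcount latticeCount
  rw [stdSimplexSet_eq_stdSimplex]
  congr 1
  ext y
  exact ⟨mem_latticePoints_of_mem hM, mem_of_mem_latticePoints hM⟩

end

variable (M) in
/-- By `sum_sub_rk_le_posSupport`, the points with `max_A (y(A) - rk A) = u`: those of
`M.latticePoints t u` that are not in `M.latticePoints (t - 1) (u - 1)`. -/
def tightPoints (t u : ℕ) : Set (α → ℤ) :=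
  {y ∈ M.latticePoints t u | M.IsTight u y (posSupport y)}

lemma mem_tightPoints_iff (hM : ∀ i, M.rk {i} ≤ 1) :
    y ∈ M.tightPoints t u ↔
      ∑ i, y i = M.rk univ + u - t ∧ M.IsTight u y (posSupport y) := by
  refine ⟨fun ⟨⟨hsum, _⟩, htight⟩ => ⟨hsum, htight⟩,
    fun ⟨hsum, htight⟩ => ⟨⟨hsum, fun A => ?_⟩, htight⟩⟩
  have := M.sum_sub_rk_le_posSupport hM y A
  unfold IsTight at htight
  omega

lemma latticePoints_succ_succ (hM : ∀ i, M.rk {i} ≤ 1) (t u : ℕ) :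
    M.latticePoints (t + 1) (u + 1) = M.latticePoints t u ∪ M.tightPoints (t + 1) (u + 1) := by
  ext y
  refine ⟨fun hy => ?_, ?_⟩
  · by_cases htight : M.IsTight (u + 1 : ℕ) y (posSupport y)
    · exact Or.inr ⟨hy, htight⟩
    · obtain ⟨hsum, hle⟩ := hy
      refine Or.inl ⟨by push_cast at hsum; omega, fun A => ?_⟩
      have := M.sum_sub_rk_le_posSupport hM y A
      have := hle (posSupport y)
      unfold IsTight at htight
      push_cast at *
      omega
  · rintro (⟨hsum, hle⟩ | hy)
    · exact ⟨by push_cast; omega, fun A => by have := hle A; push_cast; omega⟩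
    · exact hy.1

lemma disjoint_latticePoints_tightPoints (t u : ℕ) :
    Disjoint (M.latticePoints t u) (M.tightPoints (t + 1) (u + 1)) := by
  refine Set.disjoint_left.2 fun y ⟨_, hle⟩ ⟨_, htight⟩ => ?_
  have := hle (posSupport y)
  unfold IsTight at htight
  push_cast at htight
  omega

lemma tightPoints_eq_latticePoints (hM : ∀ i, M.rk {i} ≤ 1) (h : t = 0 ∨ u = 0) :
    M.tightPoints t u = M.latticePoints t u := by
  refine Set.Subset.antisymm (fun y hy => hy.1) fun y hy => ⟨hy, ?_⟩
  obtain ⟨hsum, hle⟩ := hy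
  have := hle (posSupport y)
  unfold IsTight
  rcases h with rfl | rfl
  · have := M.sum_sub_rk_le_posSupport hM y univ
    omega
  · have := Finset.natCast_card_le_sum_of_one_le (f := y) fun i (hi : i ∈ posSupport y) => by
      rw [mem_posSupport] at hi
      omega
    have := M.rk_le_card hM (posSupport y)
    omega

lemma rk_le_and_card_le_of_mem_tightPoints (hM : ∀ i, M.rk {i} ≤ 1)
    (hy : y ∈ M.tightPoints t u) :
    M.rk univ ≤ t + M.rk (posSupport y) ∧ #(posSupport y) ≤ u + M.rk (posSupport y) := by
  obtain ⟨hsum, htight⟩ := (mem_tightPoints_iff hM).1 hy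
  have := Finset.natCast_card_le_sum_of_one_le (f := y) fun i hi => mem_posSupport.1 hi
  have : ∑ i ∈ (posSupport y)ᶜ, y i ≤ 0 :=
    sum_nonpos fun i hi => not_lt.1 (mt mem_posSupport.2 (mem_compl.1 hi))
  have := sum_add_sum_compl (posSupport y) y
  unfold IsTight at htight
  omega

lemma exists_indicatorAddSub_eq (hM : ∀ i, M.rk {i} ≤ 1) (hy : y ∈ M.tightPoints t u) :
    ∃ p ∈ (posSupport y).finsuppAntidiag (u + M.rk (posSupport y) - #(posSupport y)) ×ˢ
      (posSupport y)ᶜ.finsuppAntidiag (t + M.rk (posSupport y) - M.rk univ),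
        indicatorAddSub (posSupport y) p = y := by
  obtain ⟨hr, hc⟩ := rk_le_and_card_le_of_mem_tightPoints hM hy
  obtain ⟨hsum, htight⟩ := (mem_tightPoints_iff hM).1 hy
  unfold IsTight at htight
  have hsplit := sum_add_sum_compl (posSupport y) y
  refine ⟨(Finsupp.equivFunOnFinite.symm fun i => (y i - 1).toNat,
    Finsupp.equivFunOnFinite.symm fun i => (-y i).toNat), ?_, ?_⟩
  · simp only [mem_product, mem_finsuppAntidiag, Finsupp.coe_equivFunOnFinite_symm]
    refine ⟨⟨?_, fun i hi => ?_⟩, ?_, fun i hi => ?_⟩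
    · zify [hc]
      rw [sum_congr rfl fun i hi => Int.toNat_of_nonneg (by have := mem_posSupport.1 hi; omega)]
      simp only [sum_sub_distrib, sum_const, nsmul_one]
      omega
    · rw [Finsupp.mem_support_iff, Finsupp.coe_equivFunOnFinite_symm] at hi
      exact mem_posSupport.2 (by omega)
    · zify [hr]
      rw [sum_congr rfl fun i hi =>
        Int.toNat_of_nonneg (by have := mt mem_posSupport.2 (mem_compl.1 hi); omega)]
      simp only [sum_neg_distrib]
      omega
    · rw [Finsupp.mem_support_iff, Finsupp.coe_equivFunOnFinite_symm] at hi
      exact mem_compl.2 fun h => by have := mem_posSupport.1 h; omega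
  · ext i
    simp only [indicatorAddSub, Finsupp.coe_equivFunOnFinite_symm]
    by_cases h : 0 < y i
    · rw [if_pos (mem_posSupport.2 h)]
      omega
    · rw [if_neg (mt mem_posSupport.1 h)]
      omega

lemma indicatorAddSub_mem_tightPoints (hM : ∀ i, M.rk {i} ≤ 1) {S : Finset α} {p}
    (hr : M.rk univ ≤ t + M.rk S) (hc : #S ≤ u + M.rk S)
    (hp : p ∈ S.finsuppAntidiag (u + M.rk S - #S) ×ˢ
      Sᶜ.finsuppAntidiag (t + M.rk S - M.rk univ)) :
    indicatorAddSub S p ∈ M.tightPoints t u ∧ posSupport (indicatorAddSub S p) = S := by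
  obtain ⟨ha, hb⟩ := mem_product.1 hp
  have hS : ∀ i ∈ S, indicatorAddSub S p i = 1 + p.1 i := fun i hi => by
    simp [indicatorAddSub, hi, apply_eq_zero_of_mem_finsuppAntidiag hb (notMem_compl.2 hi)]
  have hSc : ∀ i ∈ Sᶜ, indicatorAddSub S p i = -p.2 i := fun i hi => by
    simp [indicatorAddSub, mem_compl.1 hi, apply_eq_zero_of_mem_finsuppAntidiag ha (mem_compl.1 hi)]
  have hpos : posSupport (indicatorAddSub S p) = S := by
    ext i
    by_cases hi : i ∈ S
    · simp [hi, hS i hi]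
      omega
    · simp [hi, hSc i (mem_compl.2 hi)]
  have hsumS : ∑ i ∈ S, indicatorAddSub S p i = #S + (u + M.rk S - #S : ℕ) := by
    rw [sum_congr rfl hS, sum_add_distrib, ← (mem_finsuppAntidiag.1 ha).1]
    simp
  have hsumSc : ∑ i ∈ Sᶜ, indicatorAddSub S p i = -(t + M.rk S - M.rk univ : ℕ) := by
    rw [sum_congr rfl hSc, sum_neg_distrib, ← (mem_finsuppAntidiag.1 hb).1]
    simp
  refine ⟨(mem_tightPoints_iff hM).2 ⟨?_, ?_⟩, hpos⟩
  · rw [← sum_add_sum_compl S, hsumS, hsumSc]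
    omega
  · rw [IsTight, hpos, hsumS]
    omega

lemma ncard_tightPoints_fiber (hM : ∀ i, M.rk {i} ≤ 1) (S : Finset α) :
    {y ∈ M.tightPoints t u | posSupport y = S}.ncard =
      if M.rk univ ≤ t + M.rk S ∧ #S ≤ u + M.rk S then
        (#S).multichoose (u + M.rk S - #S) * (#Sᶜ).multichoose (t + M.rk S - M.rk univ)
      else 0 := by
  split_ifs with h
  · have hfiber : {y ∈ M.tightPoints t u | posSupport y = S} = indicatorAddSub S ''
        ↑(S.finsuppAntidiag (u + M.rk S - #S) ×ˢ Sᶜ.finsuppAntidiag (t + M.rk S - M.rk univ)) := by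
      ext y
      refine ⟨?_, ?_⟩
      · rintro ⟨hy, rfl⟩
        exact exists_indicatorAddSub_eq hM hy
      · rintro ⟨p, hp, rfl⟩
        exact indicatorAddSub_mem_tightPoints hM h.1 h.2 hp
    rw [hfiber, (indicatorAddSub_injOn _ _ _).ncard_image, Set.ncard_coe_finset, card_product,
      card_finsuppAntidiag_nat_eq_multichoose, card_finsuppAntidiag_nat_eq_multichoose]
  · convert Set.ncard_empty (α → ℤ)
    refine Set.eq_empty_of_forall_notMem ?_
    rintro y ⟨hy, rfl⟩
    exact h (rk_le_and_card_le_of_mem_tightPoints hM hy)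

lemma ncard_tightPoints (hM : ∀ i, M.rk {i} ≤ 1) (t u : ℕ) :
    (M.tightPoints t u).ncard = ∑ S : Finset α,
      if M.rk univ ≤ t + M.rk S ∧ #S ≤ u + M.rk S then
        (#S).multichoose (u + M.rk S - #S) * (#Sᶜ).multichoose (t + M.rk S - M.rk univ)
      else 0 := by
  rw [((latticePoints_finite hM t u).subset fun _ hy => hy.1).ncard_eq_sum_ncard_fiber posSupport]
  exact sum_congr rfl fun S _ => ncard_tightPoints_fiber hM S

lemma ncard_latticePoints_eq (hM : ∀ i, M.rk {i} ≤ 1) (t u : ℕ) :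
    (M.latticePoints t u).ncard =
      (if 1 ≤ t ∧ 1 ≤ u then (M.latticePoints (t - 1) (u - 1)).ncard else 0) +
        (M.tightPoints t u).ncard := by
  split_ifs with h
  · obtain ⟨t, rfl⟩ := Nat.exists_eq_add_of_le' h.1
    obtain ⟨u, rfl⟩ := Nat.exists_eq_add_of_le' h.2
    rw [latticePoints_succ_succ hM, Set.ncard_union_eq (disjoint_latticePoints_tightPoints t u)
      (latticePoints_finite hM t u) ((latticePoints_finite hM _ _).subset fun _ hy => hy.1)]
    simp
  · rw [tightPoints_eq_latticePoints hM (by omega), zero_add]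

open MvPowerSeries in
theorem one_sub_X_mul_X_mul_eq_sum [Nonempty α] (hM : ∀ i, M.rk {i} ≤ 1)
    {F : MvPowerSeries (Fin 2) ℤ}
    (hF : ∀ d, coeff d F = (Qcount (matroidPolytope M) (d 0) (d 1) : ℤ)) :
    (1 - X 0 * X 1) * F = ∑ S : Finset α,
      X 0 ^ (M.rk univ - M.rk S) * X 1 ^ (#S - M.rk S) * multichooseSeries ![#Sᶜ, #S] := by
  ext d
  have hXX :=
    coeff_X_pow_mul_X_pow_mul (f := fun t u => (Qcount (matroidPolytope M) t u : ℤ)) hF 1 1 d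
  rw [pow_one, pow_one] at hXX
  rw [sub_mul, one_mul, map_sub, hXX, hF, map_sum]
  simp only [Qcount_matroidPolytope hM]
  rw [ncard_latticePoints_eq hM, ncard_tightPoints hM]
  push_cast
  rw [add_sub_cancel_left]
  refine sum_congr rfl fun S _ => ?_
  rw [coeff_X_pow_mul_X_pow_mul (f := fun t u => ((#Sᶜ).multichoose t * (#S).multichoose u : ℤ))
    (coeff_multichooseSeries_fin_two _ _)]
  have := M.rk_mono (subset_univ S)
  have := M.rk_le_card hM S
  have hcond : M.rk univ - M.rk S ≤ d 0 ∧ #S - M.rk S ≤ d 1 ↔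
      M.rk univ ≤ d 0 + M.rk S ∧ #S ≤ d 1 + M.rk S := by omega
  rw [if_congr hcond rfl rfl, mul_comm]
  split_ifs
  · congr 3 <;> omega
  · rfl

end PolyMatroid

/-- The denominator-cleared power series identity relating the
generating function `Σ_{t,u} Q_M(t,u) v^t w^u` to the Tutte polynomial:
`(1−vw)(1−v)^n(1−w)^n Σ Q_M(t,u) v^t w^u
  = Σ_{S ⊆ E} v^{r(M)−r(S)} w^{|S|−r(S)} (1−v)^{|S|} (1−w)^{n−|S|}`
in `ℤ[[v,w]]`. -/
theorem stmt_0 {α : Type*} [Fintype α] [DecidableEq α] [Nonempty α]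
    (M : PolyMatroid α) (hmat : ∀ i : α, M.rk {i} ≤ 1)
    (F : MvPowerSeries (Fin 2) ℤ)
    (hF : ∀ d : Fin 2 →₀ ℕ,
      MvPowerSeries.coeff d F = (Qcount (matroidPolytope M) (d 0) (d 1) : ℤ)) :
    (1 - MvPowerSeries.X 0 * MvPowerSeries.X 1) *
        (1 - MvPowerSeries.X 0) ^ (Fintype.card α) *
        (1 - MvPowerSeries.X 1) ^ (Fintype.card α) * F =
      ∑ S : Finset α,
        (MvPowerSeries.X 0 : MvPowerSeries (Fin 2) ℤ) ^ (M.rk Finset.univ - M.rk S) *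
          MvPowerSeries.X 1 ^ (S.card - M.rk S) *
          (1 - MvPowerSeries.X 0) ^ S.card *
          (1 - MvPowerSeries.X 1) ^ (Fintype.card α - S.card) := by
  calc _ = (1 - MvPowerSeries.X 0) ^ Fintype.card α * (1 - MvPowerSeries.X 1) ^ Fintype.card α *
        ((1 - MvPowerSeries.X 0 * MvPowerSeries.X 1) * F) := by ring
    _ = _ := by
      rw [M.one_sub_X_mul_X_mul_eq_sum hmat hF, mul_sum]
      refine sum_congr rfl fun S _ => ?_
      rw [← card_add_card_compl S, Nat.add_sub_cancel_left,
        one_sub_X_pow_mul_X_pow_mul_multichooseSeries]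

end
end

section
/- Let E be a finite linearly ordered set with minimum element m, let M be a matroid on E, and let X, Y ⊆ E satisfy X ∪ Y = E and X ∩ Y = {m}. Then there exists exactly one basis B of M with the following two properties: (i) there do not exist b ∈ B and x ∈ X with b < x such that (B ∖ {b}) ∪ {x} is a basis of M; and (ii) there do not exist b ∈ B ∩ Y and z ∈ E with z < b such that (B ∖ {b}) ∪ {z} is a basis of M. -/
/-!
Let `≺` be the total order on `α` that lists `Y ∖ {m}` in decreasing order, then `m`, then
`X ∖ {m}` in increasing order; it is realised by an injective integer weight `w`. Conditions
(i) and (ii) say exactly that no exchange `B - b + c` with `b ≺ c` is a base. A base of maximum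
total weight admits no such exchange, and two bases admitting none coincide: the `w`-least
element `e` of their symmetric difference lies in one of them, say `B₁`, and the exchange axiom
replaces `e` in `B₁` by an element of `B₂ ∖ B₁`, which has larger weight.
-/

open Set Function

namespace Matroid

variable {α β : Type*} [LinearOrder β] {M : Matroid α} {B B' B₁ B₂ : Set α} {w : α → β}

theorem IsBase.exists_lt_isBase_insert_sdiff (hw : Injective w) (hB : M.IsBase B)
    (hB' : M.IsBase B') {b : α} (hb : b ∈ B \ B') (hmin : ∀ x ∈ B' \ B, w b ≤ w x) :
    ∃ c, w b < w c ∧ M.IsBase (insert c (B \ {b})) := by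
  obtain ⟨c, hc, hBc⟩ := hB.exchange hB' hb
  exact ⟨c, (hmin c hc).lt_of_ne (hw.ne (by grind)), hBc⟩

theorem IsBase.eq_of_forall_not_isBase_insert_sdiff [M.RankFinite] (hw : Injective w)
    (hB₁ : M.IsBase B₁) (hB₂ : M.IsBase B₂)
    (h₁ : ∀ b ∈ B₁, ∀ c, w b < w c → ¬ M.IsBase (insert c (B₁ \ {b})))
    (h₂ : ∀ b ∈ B₂, ∀ c, w b < w c → ¬ M.IsBase (insert c (B₂ \ {b}))) : B₁ = B₂ := by
  by_contra hne
  obtain ⟨e, he, hmin⟩ := exists_min_image _ w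
    ((hB₁.finite.union hB₂.finite).subset symmDiff_subset_union) (symmDiff_nonempty.2 hne)
  rcases he with he | he
  · obtain ⟨c, hc, hB⟩ :=
      hB₁.exists_lt_isBase_insert_sdiff hw hB₂ he fun x hx => hmin x (.inr hx)
    exact h₁ e he.1 c hc hB
  · obtain ⟨c, hc, hB⟩ :=
      hB₂.exists_lt_isBase_insert_sdiff hw hB₁ he fun x hx => hmin x (.inl hx)
    exact h₂ e he.1 c hc hB

variable [AddCommMonoid β] [IsOrderedCancelAddMonoid β]

theorem IsBase.finsum_lt_of_isBase_insert_sdiff [M.RankFinite] (hB : M.IsBase B) {b c : α}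
    (hb : b ∈ B) (hbc : w b < w c) (hB' : M.IsBase (insert c (B \ {b}))) :
    ∑ᶠ e ∈ B, w e < ∑ᶠ e ∈ insert c (B \ {b}), w e := by
  have hcB : c ∉ B := by
    intro hc
    have := hB'.eq_of_subset_isBase hB (insert_subset hc sdiff_subset) ▸ hb
    grind
  have hfin : (B \ {b}).Finite := hB.finite.sdiff
  calc ∑ᶠ e ∈ B, w e = w b + ∑ᶠ e ∈ B \ {b}, w e := by
        rw [← finsum_mem_insert _ (fun h => h.2 rfl) hfin, insert_sdiff_self_of_mem hb]
    _ < w c + ∑ᶠ e ∈ B \ {b}, w e := by gcongr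
    _ = ∑ᶠ e ∈ insert c (B \ {b}), w e :=
        (finsum_mem_insert _ (fun h => hcB h.1) hfin).symm

theorem exists_isBase_forall_not_isBase_insert_sdiff (M : Matroid α) [M.Finite] (w : α → β) :
    ∃ B, M.IsBase B ∧ ∀ b ∈ B, ∀ c, w b < w c → ¬ M.IsBase (insert c (B \ {b})) := by
  obtain ⟨B, hB, hmax⟩ := exists_max_image {B | M.IsBase B} (fun B => ∑ᶠ e ∈ B, w e)
    (M.ground_finite.finite_subsets.subset fun B hB => hB.subset_ground) M.exists_isBase
  exact ⟨B, hB, fun b hb c hbc hB' =>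
    (hB.finsum_lt_of_isBase_insert_sdiff hb hbc hB').not_ge (hmax _ hB')⟩

theorem existsUnique_isBase_forall_not_isBase_insert_sdiff (M : Matroid α) [M.Finite]
    (hw : Injective w) :
    ∃! B, M.IsBase B ∧ ∀ b ∈ B, ∀ c, w b < w c → ¬ M.IsBase (insert c (B \ {b})) := by
  obtain ⟨B, hB, hopt⟩ := M.exists_isBase_forall_not_isBase_insert_sdiff w
  exact ⟨B, ⟨hB, hopt⟩, fun B' ⟨hB', hopt'⟩ =>
    hB'.eq_of_forall_not_isBase_insert_sdiff hw hB hopt' hopt⟩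

end Matroid

theorem exists_injective_int_lt_iff {α : Type*} [LinearOrder α] [Finite α] {m : α}
    {X Y : Set α} (hm : ∀ i, m ≤ i) (hXY : X ∪ Y = univ) (hXYm : X ∩ Y = {m}) :
    ∃ w : α → ℤ, Injective w ∧ ∀ b c, w b < w c ↔ (c ∈ X ∧ b < c) ∨ (b ∈ Y ∧ c < b) := by
  classical
  obtain ⟨f⟩ := nonempty_orderEmbedding_of_finite_infinite α ℤ
  have hY : ∀ e ∉ X, e ∈ Y := fun e he => (hXY ▸ mem_univ e : e ∈ X ∪ Y).resolve_left he
  have hXY' : ∀ e ∈ X, e ∈ Y → e = m := fun e h1 h2 =>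
    (hXYm ▸ mem_inter h1 h2 : e ∈ ({m} : Set α))
  have hmX : m ∈ X := (hXYm.symm ▸ rfl : m ∈ X ∩ Y).1
  have hm_le : ∀ e, f m ≤ f e := fun e => f.le_iff_le.2 (hm e)
  have hm_lt : ∀ e ∉ X, f m < f e := fun e he =>
    f.lt_iff_lt.2 ((hm e).lt_of_ne' fun h => he (h ▸ hmX))
  let w e := if e ∈ X then f e - f m else f m - f e
  have hw : ∀ b c, w b < w c ↔ (c ∈ X ∧ b < c) ∨ (b ∈ Y ∧ c < b) := by
    intro b c
    have := hm_le b; have := hm_le c; have := hm_lt b; have := hm_lt c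
    have := f.lt_iff_lt (a := b) (b := c); have := f.lt_iff_lt (a := c) (b := b)
    have := (hm b).not_gt; have := (hm c).not_gt
    simp only [w]
    split_ifs <;> grind
  refine ⟨w, fun b c hbc => ?_, hw⟩
  by_contra hne
  rcases lt_or_gt_of_ne hne with h | h <;> grind

theorem stmt_8_general {α : Type*} [Fintype α] [LinearOrder α]
    (M : Matroid α)
    (m : α) (hm : ∀ i : α, m ≤ i)
    (X Y : Set α) (hXY : X ∪ Y = Set.univ) (hXYm : X ∩ Y = {m}) :
    ∃! B : Set α, M.IsBase B ∧
      (∀ b ∈ B, ∀ x ∈ X, b < x → ¬ M.IsBase (insert x (B \ {b}))) ∧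
      (∀ b ∈ B ∩ Y, ∀ z : α, z < b → ¬ M.IsBase (insert z (B \ {b}))) := by
  obtain ⟨w, hw, hw_lt⟩ := exists_injective_int_lt_iff hm hXY hXYm
  simpa only [hw_lt, or_imp, forall_and, and_imp, mem_inter_iff, imp_forall_iff] using
    M.existsUnique_isBase_forall_not_isBase_insert_sdiff hw

/-- Let `E` be a finite linearly ordered set with minimum element `m`,
`M` a matroid on `E`, and `X, Y ⊆ E` with `X ∪ Y = E` and `X ∩ Y = {m}`. Then there is
exactly one basis `B` of `M` such that (i) no `b ∈ B` and `x ∈ X` with `b < x` give a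
basis `(B ∖ {b}) ∪ {x}`, and (ii) no `b ∈ B ∩ Y` and `z < b` give a basis
`(B ∖ {b}) ∪ {z}`. -/
theorem stmt_8 {α : Type*} [Fintype α] [LinearOrder α] [Nonempty α]
    (M : Matroid α) (hE : M.E = Set.univ)
    (m : α) (hm : ∀ i : α, m ≤ i)
    (X Y : Set α) (hXY : X ∪ Y = Set.univ) (hXYm : X ∩ Y = {m}) :
    ∃! B : Set α, M.IsBase B ∧
      (∀ b ∈ B, ∀ x ∈ X, b < x → ¬ M.IsBase (insert x (B \ {b}))) ∧
      (∀ b ∈ B ∩ Y, ∀ z : α, z < b → ¬ M.IsBase (insert z (B \ {b}))) :=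
  stmt_8_general M m hm X Y hXY hXYm
end

section
/- Let M = (E,r) be a polymatroid and s a nonnegative integer with s ≥ r({i}) for every i ∈ E. Let M* be the s-dual of M, the polymatroid on E with rank function r*(S) = s·|S| + r(E∖S) − r(E), and let P(M*) = {x ∈ ℝ^E : Σ_{i∈E} x_i = r*(E) and Σ_{i∈S} x_i ≤ r*(S) for all S ⊆ E} be its base polytope. Then for all nonnegative integers t, u, the number of points of ℤ^E in P(M*) + uΔ + t∇ equals the number of points of ℤ^E in P(M) + tΔ + u∇; that is, Q_{M*}(t,u) = Q_M(u,t), and consequently Q'_{M*}(x,y) = Q'_M(y,x). -/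
open scoped Pointwise
open Finset

noncomputable section

variable {α : Type*} [Fintype α] [DecidableEq α]

section Aux

lemma dual_rk_symm {M Md : PolyMatroid α} {s : ℕ}
    (hdual : ∀ S : Finset α,
      (Md.rk S : ℤ) = s * S.card + M.rk Sᶜ - M.rk Finset.univ) :
    ∀ S : Finset α, (M.rk S : ℤ) = s * S.card + Md.rk Sᶜ - Md.rk Finset.univ := by
  intro S
  have h1 := hdual Sᶜ
  have h2 := hdual Finset.univ
  rw [compl_compl] at h1
  rw [Finset.compl_univ, M.rk_empty, Finset.card_univ] at h2
  have hcard : (S.card : ℤ) + (Sᶜ.card : ℤ) = (Fintype.card α : ℤ) := by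
    exact_mod_cast S.card_add_card_compl
  rw [h1, h2]
  push_cast
  linear_combination (-(s : ℤ)) * hcard

lemma dual_mem_polytope {M Md : PolyMatroid α} {s : ℕ}
    (hdual : ∀ S : Finset α,
      (Md.rk S : ℤ) = s * S.card + M.rk Sᶜ - M.rk Finset.univ)
    {x : α → ℝ} (hx : x ∈ Md.polytope) :
    (fun i => (s : ℝ) - x i) ∈ M.polytope := by
  obtain ⟨h1, h2⟩ := hx
  have hU : (Md.rk Finset.univ : ℝ)
      = s * (Fintype.card α : ℝ) - M.rk Finset.univ := by
    have h := hdual Finset.univ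
    rw [Finset.compl_univ, M.rk_empty, Finset.card_univ] at h
    have : (Md.rk Finset.univ : ℝ)
        = ((s : ℤ) * (Fintype.card α : ℤ) + (0 : ℤ) - (M.rk Finset.univ : ℤ) : ℤ) := by
      exact_mod_cast h
    push_cast at this
    linarith
  constructor
  · have e2 : (∑ i, ((s : ℝ) - x i)) = (Fintype.card α : ℝ) * s - ∑ i, x i := by
      rw [Finset.sum_sub_distrib, Finset.sum_const, Finset.card_univ, nsmul_eq_mul]
    rw [e2, h1, hU]; ring
  · intro S
    have hSc := h2 Sᶜ
    have hrkSc : (Md.rk Sᶜ : ℝ)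
        = s * (Sᶜ.card : ℝ) + M.rk S - M.rk Finset.univ := by
      have h := hdual Sᶜ
      rw [compl_compl] at h
      exact_mod_cast h
    have esplit : (∑ i ∈ S, x i) + ∑ i ∈ Sᶜ, x i = ∑ i, x i :=
      Finset.sum_add_sum_compl S x
    have e2 : (∑ i ∈ S, ((s : ℝ) - x i)) = (S.card : ℝ) * s - ∑ i ∈ S, x i := by
      rw [Finset.sum_sub_distrib, Finset.sum_const, nsmul_eq_mul]
    have hcard : (S.card : ℝ) + (Sᶜ.card : ℝ) = (Fintype.card α : ℝ) := by
      exact_mod_cast S.card_add_card_compl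
    have hcard' : (S.card : ℝ) * s + (Sᶜ.card : ℝ) * s = (Fintype.card α : ℝ) * s := by
      rw [← add_mul, hcard]
    rw [e2]
    linarith

lemma dual_mem_polytope_iff {M Md : PolyMatroid α} {s : ℕ}
    (hdual : ∀ S : Finset α,
      (Md.rk S : ℤ) = s * S.card + M.rk Sᶜ - M.rk Finset.univ)
    (x : α → ℝ) :
    x ∈ Md.polytope ↔ (fun i => (s : ℝ) - x i) ∈ M.polytope := by
  constructor
  · exact dual_mem_polytope hdual
  · intro h
    have h2 := dual_mem_polytope (dual_rk_symm hdual) h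
    have : (fun i => (s : ℝ) - ((s : ℝ) - x i)) = x := by
      funext i; ring
    simpa [this] using h2

lemma dual_mem_sum {M Md : PolyMatroid α} {s : ℕ}
    (hdual : ∀ S : Finset α,
      (Md.rk S : ℤ) = s * S.card + M.rk Sᶜ - M.rk Finset.univ)
    {t u : ℕ} {x : α → ℝ}
    (hx : x ∈ Md.polytope + (u : ℝ) • stdSimplexSet α + (t : ℝ) • (-stdSimplexSet α)) :
    (fun i => (s : ℝ) - x i) ∈
      M.polytope + (t : ℝ) • stdSimplexSet α + (u : ℝ) • (-stdSimplexSet α) := by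
  rw [Set.mem_add] at hx
  obtain ⟨y, hy, cc, hcc, hsum⟩ := hx
  rw [Set.mem_add] at hy
  obtain ⟨p, hp, b, hb, hsum2⟩ := hy
  have h1 : (fun i => (s : ℝ) - p i) ∈ M.polytope := dual_mem_polytope hdual hp
  have h2 : -cc ∈ (t : ℝ) • stdSimplexSet α := by
    rw [Set.smul_set_neg] at hcc
    exact Set.mem_neg.mp hcc
  have h3 : -b ∈ (u : ℝ) • (-stdSimplexSet α) := by
    rw [Set.smul_set_neg]
    exact Set.neg_mem_neg.mpr hb
  have hmem := Set.add_mem_add (Set.add_mem_add h1 h2) h3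
  have heq : ((fun i => (s : ℝ) - p i) + -cc) + -b = fun i => (s : ℝ) - x i := by
    funext i
    have : x i = p i + b i + cc i := by rw [← hsum, ← hsum2]; rfl
    simp only [Pi.add_apply, Pi.neg_apply, this]
    ring
  rwa [heq] at hmem

lemma dual_mem_sum_iff {M Md : PolyMatroid α} {s : ℕ}
    (hdual : ∀ S : Finset α,
      (Md.rk S : ℤ) = s * S.card + M.rk Sᶜ - M.rk Finset.univ)
    (t u : ℕ) (x : α → ℝ) :
    x ∈ Md.polytope + (u : ℝ) • stdSimplexSet α + (t : ℝ) • (-stdSimplexSet α) ↔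
    (fun i => (s : ℝ) - x i) ∈
      M.polytope + (t : ℝ) • stdSimplexSet α + (u : ℝ) • (-stdSimplexSet α) := by
  constructor
  · exact dual_mem_sum hdual
  · intro h
    have h2 := dual_mem_sum (dual_rk_symm hdual) h
    have : (fun i => (s : ℝ) - ((s : ℝ) - x i)) = x := by
      funext i; ring
    simpa [this] using h2

lemma qcount_dual {M Md : PolyMatroid α} {s : ℕ}
    (hdual : ∀ S : Finset α,
      (Md.rk S : ℤ) = s * S.card + M.rk Sᶜ - M.rk Finset.univ) :
    ∀ t u : ℕ, Qcount Md.polytope t u = Qcount M.polytope u t := by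
  intro t u
  unfold Qcount latticeCount
  set A := Md.polytope + (u : ℝ) • stdSimplexSet α + (t : ℝ) • (-stdSimplexSet α) with hA
  set B := M.polytope + (t : ℝ) • stdSimplexSet α + (u : ℝ) • (-stdSimplexSet α) with hB
  have hAB : ∀ x : α → ℝ, x ∈ A ↔ (fun i => (s : ℝ) - x i) ∈ B :=
    dual_mem_sum_iff hdual t u
  have hcast : ∀ r : α → ℤ,
      (fun i => ((((s : ℤ) - r i) : ℤ) : ℝ)) = fun i => (s : ℝ) - (r i : ℝ) := by
    intro r; funext i; push_cast; ring
  have himg : {q : α → ℤ | (fun i => (q i : ℝ)) ∈ A}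
      = (fun q : α → ℤ => (fun i => (s : ℤ) - q i)) ''
        {q : α → ℤ | (fun i => (q i : ℝ)) ∈ B} := by
    ext q
    simp only [Set.mem_image, Set.mem_setOf_eq]
    constructor
    · intro h
      refine ⟨fun i => (s : ℤ) - q i, ?_, ?_⟩
      · rw [hcast]
        exact (hAB _).mp h
      · funext i; ring
    · rintro ⟨r, hr, rfl⟩
      apply (hAB _).mpr
      have heq2 : (fun i => (s : ℝ) - ((((s : ℤ) - r i) : ℤ) : ℝ)) = fun i => (r i : ℝ) := by
        funext i; push_cast; ring
      show (fun i => (s : ℝ) - ((((s : ℤ) - r i) : ℤ) : ℝ)) ∈ B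
      rw [heq2]
      exact hr
  have hinj : Function.Injective (fun q : α → ℤ => (fun i => (s : ℤ) - q i)) := by
    intro a b h
    funext i
    have := congrFun h i
    simp only at this
    omega
  rw [himg, Set.ncard_image_of_injective _ hinj]

lemma qdatumFun_unique {Q : ℕ → ℕ → ℕ} {c d : ℕ × ℕ → ℤ}
    (hc : IsQdatumFun Q c) (hd : IsQdatumFun Q d) : c = d := by
  obtain ⟨hcf, hce⟩ := hc
  obtain ⟨hdf, hde⟩ := hd
  set T : Finset (ℕ × ℕ) := (hcf.union hdf).toFinset with hT
  have hTc : Function.support c ⊆ ↑T := by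
    intro p hp
    simp only [hT, Finset.mem_coe, Set.Finite.mem_toFinset, Set.mem_union]
    exact Or.inl hp
  have hTd : Function.support d ⊆ ↑T := by
    intro p hp
    simp only [hT, Finset.mem_coe, Set.Finite.mem_toFinset, Set.mem_union]
    exact Or.inr hp
  have hsum : ∀ t u : ℕ,
      ∑ p ∈ T, (c p - d p) * (t.choose p.1 : ℤ) * (u.choose p.2 : ℤ) = 0 := by
    intro t u
    have h1 : (Q t u : ℤ) = ∑ p ∈ T, c p * (t.choose p.1 : ℤ) * (u.choose p.2 : ℤ) := by
      rw [hce t u]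
      apply finsum_eq_finset_sum_of_support_subset
      intro p hp
      apply hTc
      simp only [Function.mem_support] at hp ⊢
      intro h; exact hp (by rw [h]; ring)
    have h2 : (Q t u : ℤ) = ∑ p ∈ T, d p * (t.choose p.1 : ℤ) * (u.choose p.2 : ℤ) := by
      rw [hde t u]
      apply finsum_eq_finset_sum_of_support_subset
      intro p hp
      apply hTd
      simp only [Function.mem_support] at hp ⊢
      intro h; exact hp (by rw [h]; ring)
    have h3 := h1.symm.trans h2
    simp only [sub_mul]
    rw [Finset.sum_sub_distrib]
    exact sub_eq_zero_of_eq h3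
  have key : ∀ n : ℕ, ∀ p : ℕ × ℕ, p.1 + p.2 = n → c p = d p := by
    intro n
    induction n using Nat.strong_induction_on with
    | _ n ih =>
      intro p hpn
      by_cases hpT : p ∈ T
      · have h0 := hsum p.1 p.2
        rw [Finset.sum_eq_single_of_mem p hpT] at h0
        · simpa [Nat.choose_self, sub_eq_zero] using h0
        · intro q hqT hqp
          rcases le_or_gt q.1 p.1 with hq1 | hq1
          · rcases le_or_gt q.2 p.2 with hq2 | hq2
            · have hne : q.1 ≠ p.1 ∨ q.2 ≠ p.2 := by
                by_contra h
                push_neg at h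
                exact hqp (Prod.ext h.1 h.2)
              have hlt : q.1 + q.2 < n := by omega
              have := ih (q.1 + q.2) hlt q rfl
              simp [this]
            · simp [Nat.choose_eq_zero_of_lt hq2]
          · simp [Nat.choose_eq_zero_of_lt hq1]
      · have hc0 : c p = 0 := by
          by_contra h
          exact hpT (hTc h)
        have hd0 : d p = 0 := by
          by_contra h
          exact hpT (hTd h)
        rw [hc0, hd0]
  funext p
  exact key (p.1 + p.2) p rfl

end Aux

/-- If `M*` is the `s`-dual of a polymatroid `M` (where `s ≥ r({i})`
for every `i`), with rank function `r*(S) = s|S| + r(E∖S) − r(E)`, then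
`Q_{M*}(t,u) = Q_M(u,t)` for all `t, u`, and consequently `Q'_{M*}(x,y) = Q'_M(y,x)`. -/
theorem stmt_11 {α : Type*} [Fintype α] [DecidableEq α]
    (M Mdual : PolyMatroid α) (s : ℕ) (hs : ∀ i : α, M.rk {i} ≤ s)
    (hdual : ∀ S : Finset α,
      (Mdual.rk S : ℤ) = s * S.card + M.rk Sᶜ - M.rk Finset.univ)
    (c cdual : ℕ × ℕ → ℤ)
    (hc : IsQdatum M.polytope c) (hcdual : IsQdatum Mdual.polytope cdual) :
    (∀ t u : ℕ, Qcount Mdual.polytope t u = Qcount M.polytope u t) ∧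
    (∀ x y : ℚ, Qprime cdual x y = Qprime c y x) := by
  have hQ : ∀ t u : ℕ, Qcount Mdual.polytope t u = Qcount M.polytope u t :=
    qcount_dual hdual
  refine ⟨hQ, ?_⟩
  set cswap : ℕ × ℕ → ℤ := fun p => c (p.2, p.1) with hcs
  have hswap : IsQdatum Mdual.polytope cswap := by
    constructor
    · have hsub : Function.support cswap ⊆ Prod.swap ⁻¹' (Function.support c) := by
        intro p hp
        exact hp
      exact Set.Finite.subset (hc.1.preimage Prod.swap_injective.injOn) hsub
    · intro t u
      rw [hQ t u, hc.2 u t]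
      calc (∑ᶠ p : ℕ × ℕ, c p * (u.choose p.1 : ℤ) * (t.choose p.2 : ℤ))
          = ∑ᶠ p : ℕ × ℕ,
              (fun q : ℕ × ℕ => c q * (u.choose q.1 : ℤ) * (t.choose q.2 : ℤ))
                ((Equiv.prodComm ℕ ℕ) p) := (finsum_comp_equiv (Equiv.prodComm ℕ ℕ)).symm
        _ = ∑ᶠ p : ℕ × ℕ, cswap p * (t.choose p.1 : ℤ) * (u.choose p.2 : ℤ) := by
            apply finsum_congr
            intro p
            simp only [Equiv.prodComm_apply, Prod.swap, hcs]
            ring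
  have hcd : cdual = cswap := qdatumFun_unique hcdual hswap
  intro x y
  rw [hcd]
  unfold Qprime
  calc (∑ᶠ p : ℕ × ℕ, (cswap p : ℚ) * (x - 1) ^ p.1 * (y - 1) ^ p.2)
      = ∑ᶠ p : ℕ × ℕ,
          (fun q : ℕ × ℕ => (c q : ℚ) * (y - 1) ^ q.1 * (x - 1) ^ q.2)
            ((Equiv.prodComm ℕ ℕ) p) := by
        apply finsum_congr
        intro p
        simp only [Equiv.prodComm_apply, Prod.swap, hcs]
        ring
    _ = ∑ᶠ p : ℕ × ℕ, (c p : ℚ) * (y - 1) ^ p.1 * (x - 1) ^ p.2 :=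
        finsum_comp_equiv (Equiv.prodComm ℕ ℕ)
          (f := fun q : ℕ × ℕ => (c q : ℚ) * (y - 1) ^ q.1 * (x - 1) ^ q.2)

end
end
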